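/- Let σ₀, σ_s, σ_h > 0 and μ_h ∈ ℝ. Define σ² = σ₀²σ_s²/(σ₀² + σ_s²), σ₁² = σ² + σ⁴/σ_s², σ_φ = 2·√(σ₁² + (σ⁴/σ₀⁴)σ_h²), μ_φ(μ) = 2σ²(μ/σ_s² + μ_h/σ₀²), and g(μ) = Φ(−μ_φ(μ)/σ_φ), where Φ is the standard normal cumulative distribution function. Then sup_{μ∈ℝ} |g′(μ)| ≤ 1 if and only if σ_s² ≥ (−4πσ₀⁴ + √(16π²σ₀⁸ + 8π(σ₀² + σ_h²)σ₀⁴)) / (4π(σ₀² + σ_h²)). Moreover, if this inequality is strict, then g is a contraction on ℝ, g has a unique fixed point μ* ∈ (0,1), and for every initial value μ⁰ ∈ ℝ the iterates μ^t = g(μ^{t−1}) converge to μ* as t → ∞. -/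

import Mathlib

open MeasureTheory Filter

/-- Standard normal density ϕ(y) = (2π)^{−1/2} e^{−y²/2}. -/
noncomputable def stdNormalPdf (y : ℝ) : ℝ :=
  (2 * Real.pi) ^ (-(1 : ℝ) / 2) * Real.exp (-y ^ 2 / 2)

/-- Standard normal cumulative distribution function Φ. -/
noncomputable def stdNormalCdf (y : ℝ) : ℝ :=
  ∫ u in Set.Iio y, stdNormalPdf u

/-!
Writing `g μ = Φ(a μ + b)` with `a = -2σ²/(σ_s² σ_φ)`, we get `|g'(μ)| = ϕ(a μ + b) |a|`, whose
supremum is `|a| ϕ(0) = |a| / √(2π)`, attained where `a μ + b = 0`. Clearing denominators,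
`a² / (2π) ≤ 1` becomes `σ₀⁴ ≤ 2π(σ₀² + σ_h²) S² + 4πσ₀⁴ S` with `S = σ_s²`; the right side is
increasing in `S ≥ 0`, so this holds exactly from its positive root `c` on. When the supremum is
`< 1`, `g` is a contraction and Banach's fixed point theorem applies; the fixed point lies in
`(0, 1)` because it is a value of `Φ`.
-/

open Real

lemma rpow_neg_half_eq_inv_sqrt {x : ℝ} (hx : 0 ≤ x) : x ^ (-(1 : ℝ) / 2) = (√x)⁻¹ := by
  rw [sqrt_eq_rpow, ← rpow_neg hx]
  norm_num

lemma stdNormalPdf_eq_gaussianPDFReal : stdNormalPdf = ProbabilityTheory.gaussianPDFReal 0 1 := by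
  funext y
  rw [stdNormalPdf, ProbabilityTheory.gaussianPDFReal, rpow_neg_half_eq_inv_sqrt (by positivity)]
  norm_num

lemma stdNormalPdf_pos (y : ℝ) : 0 < stdNormalPdf y := by
  rw [stdNormalPdf]; positivity

lemma stdNormalPdf_zero : stdNormalPdf 0 = (√(2 * π))⁻¹ := by
  rw [stdNormalPdf, rpow_neg_half_eq_inv_sqrt (by positivity)]
  norm_num

lemma stdNormalPdf_le_stdNormalPdf_zero (y : ℝ) : stdNormalPdf y ≤ stdNormalPdf 0 := by
  unfold stdNormalPdf
  exact mul_le_mul_of_nonneg_left (exp_le_exp.2 (by nlinarith [sq_nonneg y])) (by positivity)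

lemma continuous_stdNormalPdf : Continuous stdNormalPdf := by
  unfold stdNormalPdf; fun_prop

lemma integrable_stdNormalPdf : Integrable stdNormalPdf := by
  rw [stdNormalPdf_eq_gaussianPDFReal]
  exact ProbabilityTheory.integrable_gaussianPDFReal 0 1

lemma integral_stdNormalPdf : ∫ u, stdNormalPdf u = 1 := by
  rw [stdNormalPdf_eq_gaussianPDFReal]
  exact ProbabilityTheory.integral_gaussianPDFReal_eq_one 0 one_ne_zero

lemma setIntegral_stdNormalPdf_pos {s : Set ℝ} (hs : volume s ≠ 0) :
    0 < ∫ u in s, stdNormalPdf u := by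
  rw [setIntegral_pos_iff_support_of_nonneg_ae
    (Eventually.of_forall fun u => (stdNormalPdf_pos u).le) integrable_stdNormalPdf.integrableOn,
    Function.support_eq_univ fun u => (stdNormalPdf_pos u).ne', Set.univ_inter]
  exact pos_iff_ne_zero.2 hs

lemma hasDerivAt_stdNormalCdf (y : ℝ) : HasDerivAt stdNormalCdf (stdNormalPdf y) y := by
  have hint := integrable_stdNormalPdf
  have hsplit : ∀ z, stdNormalCdf z =
      (∫ u in Set.Iic 0, stdNormalPdf u) + ∫ u in (0 : ℝ)..z, stdNormalPdf u := by
    intro z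
    rw [stdNormalCdf, setIntegral_congr_set Iio_ae_eq_Iic,
      ← intervalIntegral.integral_Iic_sub_Iic hint.integrableOn hint.integrableOn]
    ring
  have hFTC := intervalIntegral.integral_hasDerivAt_right (a := 0) (b := y)
    hint.intervalIntegrable
    (continuous_stdNormalPdf.stronglyMeasurableAtFilter _ _) continuous_stdNormalPdf.continuousAt
  exact (hFTC.const_add _).congr_of_eventuallyEq (Eventually.of_forall hsplit)

lemma stdNormalCdf_mem_Ioo (y : ℝ) : stdNormalCdf y ∈ Set.Ioo 0 1 := by
  have hsum := intervalIntegral.integral_Iio_add_Ici (μ := volume) (b := y)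
    integrable_stdNormalPdf.integrableOn integrable_stdNormalPdf.integrableOn
  have hIci := setIntegral_stdNormalPdf_pos (s := Set.Ici y) (by simp)
  rw [integral_stdNormalPdf] at hsum
  exact ⟨setIntegral_stdNormalPdf_pos (by simp), by rw [stdNormalCdf]; linarith⟩

section Affine

variable (a b : ℝ)

lemma hasDerivAt_stdNormalCdf_affine (μ : ℝ) :
    HasDerivAt (fun μ => stdNormalCdf (a * μ + b)) (stdNormalPdf (a * μ + b) * a) μ := by
  have hlin : HasDerivAt (fun μ => a * μ + b) a μ := by
    simpa using ((hasDerivAt_id μ).const_mul a).add_const b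
  exact (hasDerivAt_stdNormalCdf _).comp μ hlin

lemma abs_deriv_stdNormalCdf_affine (μ : ℝ) :
    |deriv (fun μ => stdNormalCdf (a * μ + b)) μ| = stdNormalPdf (a * μ + b) * |a| := by
  rw [(hasDerivAt_stdNormalCdf_affine a b μ).deriv, abs_mul, abs_of_pos (stdNormalPdf_pos _)]

lemma abs_deriv_stdNormalCdf_affine_le (μ : ℝ) :
    |deriv (fun μ => stdNormalCdf (a * μ + b)) μ| ≤ |a| / √(2 * π) := by
  rw [abs_deriv_stdNormalCdf_affine, div_eq_inv_mul |a|, ← stdNormalPdf_zero]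
  exact mul_le_mul_of_nonneg_right (stdNormalPdf_le_stdNormalPdf_zero _) (abs_nonneg a)

lemma iSup_abs_deriv_stdNormalCdf_affine :
    ⨆ μ, |deriv (fun μ => stdNormalCdf (a * μ + b)) μ| = |a| / √(2 * π) := by
  -- the maximum is attained where `a μ + b = 0`; for `a = 0` both sides vanish
  have hattain : |deriv (fun μ => stdNormalCdf (a * μ + b)) (-b / a)| = |a| / √(2 * π) := by
    rw [abs_deriv_stdNormalCdf_affine, div_eq_inv_mul |a|, ← stdNormalPdf_zero]
    rcases eq_or_ne a 0 with rfl | ha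
    · simp
    · rw [mul_div_cancel₀ _ ha, neg_add_cancel]
  have hbound := abs_deriv_stdNormalCdf_affine_le a b
  exact le_antisymm (ciSup_le hbound)
    (le_ciSup_of_le ⟨_, Set.forall_mem_range.2 hbound⟩ _ hattain.ge)

lemma contractingWith_stdNormalCdf_affine (ha : |a| / √(2 * π) < 1) :
    ContractingWith ⟨|a| / √(2 * π), by positivity⟩ (fun μ => stdNormalCdf (a * μ + b)) := by
  refine ⟨ha, lipschitzWith_of_nnnorm_deriv_le
    (fun μ => (hasDerivAt_stdNormalCdf_affine a b μ).differentiableAt) fun μ => ?_⟩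
  refine NNReal.coe_le_coe.1 ?_
  rw [coe_nnnorm, Real.norm_eq_abs]
  exact abs_deriv_stdNormalCdf_affine_le a b μ

end Affine

lemma le_quadratic_iff_root_le {α β γ c S : ℝ} (hα : 0 < α) (hβ : 0 ≤ β) (hγ : 0 ≤ γ)
    (hS : 0 ≤ S) (hc : c = (-β + √(β ^ 2 + 4 * α * γ)) / (2 * α)) :
    (γ ≤ α * S ^ 2 + β * S ↔ c ≤ S) ∧ (γ < α * S ^ 2 + β * S ↔ c < S) := by
  set D := √(β ^ 2 + 4 * α * γ)
  have hD : D ^ 2 = β ^ 2 + 4 * α * γ := sq_sqrt (by positivity)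
  have hβD : β ≤ D := le_sqrt_of_sq_le (by nlinarith)
  have hc_nonneg : 0 ≤ c := by rw [hc]; exact div_nonneg (by linarith) (by positivity)
  have hroot : α * c ^ 2 + β * c = γ := by
    rw [hc]; field_simp; linear_combination hD
  have hmono : StrictMonoOn (fun S => α * S ^ 2 + β * S) (Set.Ici 0) := by
    intro x hx y hy hxy
    simp only [Set.mem_Ici] at hx
    have hpos : 0 < (y - x) * (α * (x + y) + β) :=
      mul_pos (sub_pos.2 hxy) (add_pos_of_pos_of_nonneg (mul_pos hα (by linarith)) hβ)
    linear_combination hpos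
  rw [← hroot]
  exact ⟨hmono.le_iff_le hc_nonneg hS, hmono.lt_iff_lt hc_nonneg hS⟩

lemma minority_slope_sq {σ0 σs σh σ2 σ12 σφ : ℝ} (h0 : 0 < σ0) (hs : 0 < σs)
    (hσ2 : σ2 = σ0 ^ 2 * σs ^ 2 / (σ0 ^ 2 + σs ^ 2))
    (hσ12 : σ12 = σ2 + σ2 ^ 2 / σs ^ 2)
    (hσφ : σφ = 2 * √(σ12 + (σ2 ^ 2 / σ0 ^ 4) * σh ^ 2)) :
    (2 * σ2 / (σs ^ 2 * σφ)) ^ 2 / (2 * π) =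
      σ0 ^ 4 / (2 * π * (σ0 ^ 2 + σh ^ 2) * (σs ^ 2) ^ 2 + 4 * π * σ0 ^ 4 * σs ^ 2) := by
  have hvar : σ12 + (σ2 ^ 2 / σ0 ^ 4) * σh ^ 2 =
      σs ^ 2 * (2 * σ0 ^ 4 + σ0 ^ 2 * σs ^ 2 + σs ^ 2 * σh ^ 2) / (σ0 ^ 2 + σs ^ 2) ^ 2 := by
    rw [hσ12, hσ2]; field_simp; ring
  rw [hσφ]
  simp only [div_pow, mul_pow]
  rw [sq_sqrt (by rw [hvar]; positivity), hvar, hσ2]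
  field_simp
  ring

theorem stmt_14_general (σ0 σs σh μh : ℝ) (h0 : 0 < σ0) (hs : 0 < σs)
    (σ2 σ12 σφ : ℝ)
    (hσ2 : σ2 = σ0 ^ 2 * σs ^ 2 / (σ0 ^ 2 + σs ^ 2))
    (hσ12 : σ12 = σ2 + σ2 ^ 2 / σs ^ 2)
    (hσφ : σφ = 2 * Real.sqrt (σ12 + (σ2 ^ 2 / σ0 ^ 4) * σh ^ 2))
    (μφ : ℝ → ℝ) (hμφ : ∀ μ, μφ μ = 2 * σ2 * (μ / σs ^ 2 + μh / σ0 ^ 2))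
    (g : ℝ → ℝ) (hg : ∀ μ, g μ = stdNormalCdf (-μφ μ / σφ))
    (c : ℝ)
    (hc : c = (-4 * Real.pi * σ0 ^ 4 +
        Real.sqrt (16 * Real.pi ^ 2 * σ0 ^ 8 +
          8 * Real.pi * (σ0 ^ 2 + σh ^ 2) * σ0 ^ 4)) /
      (4 * Real.pi * (σ0 ^ 2 + σh ^ 2))) :
    ((⨆ μ : ℝ, |deriv g μ|) ≤ 1 ↔ c ≤ σs ^ 2) ∧
    (c < σs ^ 2 →
      (∃ L : NNReal, L < 1 ∧ LipschitzWith L g) ∧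
      ∃ μstar : ℝ, g μstar = μstar ∧ μstar ∈ Set.Ioo (0 : ℝ) 1 ∧
        (∀ μ' : ℝ, g μ' = μ' → μ' = μstar) ∧
        ∀ μ0 : ℝ, Tendsto (fun t : ℕ => g^[t] μ0) atTop (nhds μstar)) := by
  set a := -(2 * σ2 / (σs ^ 2 * σφ))
  set b := -(2 * σ2 * μh / (σ0 ^ 2 * σφ))
  obtain rfl : g = fun μ => stdNormalCdf (a * μ + b) := by
    funext μ
    rw [hg, hμφ]
    simp only [a, b]
    congr 1
    ring
  have hslope : (|a| / √(2 * π)) ^ 2 =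
      σ0 ^ 4 / (2 * π * (σ0 ^ 2 + σh ^ 2) * (σs ^ 2) ^ 2 + 4 * π * σ0 ^ 4 * σs ^ 2) := by
    rw [div_pow, sq_abs, sq_sqrt (by positivity), neg_sq,
      minority_slope_sq h0 hs hσ2 hσ12 hσφ]
  have hquad := le_quadratic_iff_root_le (β := 4 * π * σ0 ^ 4) (γ := σ0 ^ 4) (c := c)
    (S := σs ^ 2) (show 0 < 2 * π * (σ0 ^ 2 + σh ^ 2) by positivity) (by positivity) (by positivity)
    (by positivity) (by rw [hc]; ring_nf)
  have hden : 0 < 2 * π * (σ0 ^ 2 + σh ^ 2) * (σs ^ 2) ^ 2 + 4 * π * σ0 ^ 4 * σs ^ 2 := by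
    positivity
  have hle : |a| / √(2 * π) ≤ 1 ↔ c ≤ σs ^ 2 := by
    rw [← sq_le_one_iff₀ (by positivity), hslope, div_le_one hden, hquad.1]
  have hlt : |a| / √(2 * π) < 1 ↔ c < σs ^ 2 := by
    rw [← sq_lt_one_iff₀ (by positivity), hslope, div_lt_one hden, hquad.2]
  refine ⟨by rw [iSup_abs_deriv_stdNormalCdf_affine, hle], fun hc_lt => ?_⟩
  have hcontr := contractingWith_stdNormalCdf_affine a b (hlt.2 hc_lt)
  refine ⟨⟨_, hcontr⟩, _, hcontr.fixedPoint_isFixedPt, ?_, fun _ => hcontr.fixedPoint_unique,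
    hcontr.tendsto_iterate_fixedPoint⟩
  rw [← hcontr.fixedPoint_isFixedPt]
  exact stdNormalCdf_mem_Ioo _

/-- in the minority game, sup_μ |g′(μ)| ≤ 1 iff
σ_s² ≥ (−4πσ₀⁴ + √(16π²σ₀⁸ + 8π(σ₀² + σ_h²)σ₀⁴))/(4π(σ₀² + σ_h²)); and when the
inequality is strict, g is a contraction with a unique fixed point μ* ∈ (0,1) to which
all iterates μ^t = g(μ^{t−1}) converge. -/
theorem stmt_14 (σ0 σs σh μh : ℝ) (h0 : 0 < σ0) (hs : 0 < σs) (hh : 0 < σh)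
    (σ2 σ12 σφ : ℝ)
    (hσ2 : σ2 = σ0 ^ 2 * σs ^ 2 / (σ0 ^ 2 + σs ^ 2))
    (hσ12 : σ12 = σ2 + σ2 ^ 2 / σs ^ 2)
    (hσφ : σφ = 2 * Real.sqrt (σ12 + (σ2 ^ 2 / σ0 ^ 4) * σh ^ 2))
    (μφ : ℝ → ℝ) (hμφ : ∀ μ, μφ μ = 2 * σ2 * (μ / σs ^ 2 + μh / σ0 ^ 2))
    (g : ℝ → ℝ) (hg : ∀ μ, g μ = stdNormalCdf (-μφ μ / σφ))
    (c : ℝ)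
    (hc : c = (-4 * Real.pi * σ0 ^ 4 +
        Real.sqrt (16 * Real.pi ^ 2 * σ0 ^ 8 +
          8 * Real.pi * (σ0 ^ 2 + σh ^ 2) * σ0 ^ 4)) /
      (4 * Real.pi * (σ0 ^ 2 + σh ^ 2))) :
    ((⨆ μ : ℝ, |deriv g μ|) ≤ 1 ↔ c ≤ σs ^ 2) ∧
    (c < σs ^ 2 →
      (∃ L : NNReal, L < 1 ∧ LipschitzWith L g) ∧
      ∃ μstar : ℝ, g μstar = μstar ∧ μstar ∈ Set.Ioo (0 : ℝ) 1 ∧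
        (∀ μ' : ℝ, g μ' = μ' → μ' = μstar) ∧
        ∀ μ0 : ℝ, Tendsto (fun t : ℕ => g^[t] μ0) atTop (nhds μstar)) :=
  stmt_14_general σ0 σs σh μh h0 hs σ2 σ12 σφ hσ2 hσ12 hσφ μφ hμφ g hg c hc
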